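/- arXiv:1701.04708 — 7 statements merged into one kernel-verified Lean document; each statement's English description precedes it below -/
import Mathlib

section
/- Let σ = (ρ, a+ib, a−ib, 0) with b ≠ 0 and α = (ρ+2a)/4 ≥ 0. If 4s₂ ≥ s₁², where s₁ = ρ + 2a and s₂ = ρ² + 2(a² − b²), and ρ ≥ 2a, then the trace-zero monic degree-4 polynomial whose roots are ρ−α, a−α±ib, −α has all non-leading coefficients ≤ 0, so its companion matrix C is nonnegative and σ is realized by the nonnegative matrix αI₄ + C. -/
/-!
Shifting the spectrum by `-α` makes it trace zero, so the shifted quartic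
`g = (X - r)(X² - 2mX + q)(X + α)` (`r = ρ - α`, `m = a - α`, `q = m² + b²`) has no `X³` term.
Its remaining coefficients are `-(4s₂ - s₁²)/8`, `2m(q + αr)` and `-αrq`, all `≤ 0` since
`4s₂ ≥ s₁²` and `α, r ≥ 0 ≥ m`. Hence the companion matrix of `g` is nonnegative, and adding `αI` translates
its eigenvalues back: `charpoly (αI + C) = g(X - α)`.
-/

open Polynomial

namespace Matrix

variable {R n : Type*} [CommRing R] [Fintype n] [DecidableEq n]

theorem charpoly_smul_one_add (μ : R) (M : Matrix n n R) :
    (μ • 1 + M).charpoly = M.charpoly.comp (X - C μ) := by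
  have h := charpoly_sub_scalar (μ • 1 + M) μ
  rw [scalar_apply, ← smul_one_eq_diagonal, add_sub_cancel_left] at h
  rw [h, comp_assoc]
  simp

end Matrix

section Companion

def companion4 {R : Type*} [Ring R] (p : R[X]) : Matrix (Fin 4) (Fin 4) R :=
  Matrix.of fun i j => if (i : ℕ) = 3 then -p.coeff j else if (j : ℕ) = i + 1 then 1 else 0

theorem companion4_nonneg {R : Type*} [Ring R] [PartialOrder R] [IsOrderedRing R] {p : R[X]}
    (hp : ∀ k < 4, p.coeff k ≤ 0) (i j : Fin 4) : 0 ≤ companion4 p i j := by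
  simp only [companion4, Matrix.of_apply]
  split_ifs
  · exact neg_nonneg.mpr (hp j j.isLt)
  · exact zero_le_one
  · exact le_rfl

variable {R : Type*} [CommRing R]

theorem charpoly_companion4 (p : R[X]) :
    (companion4 p).charpoly = X ^ 4 + C (p.coeff 3) * X ^ 3 + C (p.coeff 2) * X ^ 2 +
      C (p.coeff 1) * X + C (p.coeff 0) := by
  simp only [Matrix.charpoly, Matrix.det_succ_row_zero, Fin.sum_univ_succ, Fin.sum_univ_zero,
    Matrix.charmatrix_apply, companion4, Matrix.submatrix_apply, Matrix.of_apply,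
    Matrix.det_unique]
  norm_num [Fin.succ, Fin.succAbove, Fin.lt_def, Fin.ext_iff]
  ring

theorem Polynomial.Monic.charpoly_companion4 {p : R[X]} (hp : p.Monic) (hdeg : p.natDegree = 4) :
    (companion4 p).charpoly = p := by
  conv_rhs => rw [hp.as_sum, hdeg]
  rw [_root_.charpoly_companion4]
  simp only [Finset.sum_range_succ, Finset.sum_range_zero, pow_zero, pow_one, mul_one]
  ring

end Companion

theorem quartic_eq_of_trace_eq_zero {R : Type*} [CommRing R] {r m q α : R}
    (htr : α = r + 2 * m) :
    (X - C r) * (X ^ 2 - C (2 * m) * X + C q) * (X + C α) =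
      X ^ 4 + C (q - α * r - 4 * m ^ 2) * X ^ 2 + C (2 * m * (q + α * r)) * X +
        C (-(α * r * q)) := by
  subst htr
  simp only [C_add, C_sub, C_mul, C_neg, C_pow, C_ofNat]
  ring

theorem quartic_coeff_nonpos_of_trace_eq_zero {r m q α : ℝ} (htr : α = r + 2 * m)
    (hα : 0 ≤ α) (hr : 0 ≤ r) (hm : m ≤ 0) (hq : 0 ≤ q) (hq' : q ≤ α * r + 4 * m ^ 2) :
    ∀ k < 4, ((X - C r) * (X ^ 2 - C (2 * m) * X + C q) * (X + C α)).coeff k ≤ 0 := by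
  intro k hk
  rw [quartic_eq_of_trace_eq_zero htr]
  interval_cases k <;>
    simp only [coeff_add, coeff_C_mul, coeff_X_pow, coeff_X, coeff_C] <;> norm_num
  · positivity
  · nlinarith [mul_nonneg hα hr]
  · linarith

theorem quartic_comp_X_sub_C {R : Type*} [CommRing R] (ρ a b α : R) :
    ((X - C (ρ - α)) * (X ^ 2 - C (2 * (a - α)) * X + C ((a - α) ^ 2 + b ^ 2)) *
      (X + C α)).comp (X - C α) = (X - C ρ) * (X ^ 2 - C (2 * a) * X + C (a ^ 2 + b ^ 2)) * X := by
  simp only [mul_comp, sub_comp, add_comp, pow_comp, X_comp, C_comp, ofNat_comp, C_add, C_sub,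
    C_mul, C_pow, C_ofNat]
  ring

open Polynomial in
theorem stmt3_general (ρ a b : ℝ) (α : ℝ) (hα : α = (ρ + 2*a)/4) (hα0 : 0 ≤ α)
    (hJLL : 4 * (ρ^2 + 2*(a^2 - b^2)) ≥ (ρ + 2*a)^2) (hρ : ρ ≥ 2*a)
    (g : Polynomial ℝ)
    (hg : g = (X - C (ρ - α)) * (X^2 - C (2*(a - α)) * X + C ((a - α)^2 + b^2)) *
      (X + C α))
    (Cm : Matrix (Fin 4) (Fin 4) ℝ)
    (hCm : Cm = Matrix.of fun (i j : Fin 4) =>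
      if (i : ℕ) = 3 then -g.coeff (j : ℕ)
      else if (j : ℕ) = (i : ℕ) + 1 then 1 else 0) :
    (∀ k < 4, g.coeff k ≤ 0) ∧ (∀ i j, 0 ≤ Cm i j) ∧
    (α • (1 : Matrix (Fin 4) (Fin 4) ℝ) + Cm).charpoly =
      (X - C ρ) * (X^2 - C (2*a) * X + C (a^2 + b^2)) * X := by
  change Cm = companion4 g at hCm
  -- the last inequality is `4 s₂ ≥ s₁²`, rearranged
  have hcoeff : ∀ k < 4, g.coeff k ≤ 0 := hg ▸
    quartic_coeff_nonpos_of_trace_eq_zero (by linarith) hα0 (by linarith) (by linarith)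
      (by positivity) (by subst hα; linarith)
  have hmonic : g.Monic := by rw [hg]; monicity!
  have hdeg : g.natDegree = 4 := by rw [hg]; compute_degree!
  refine ⟨hcoeff, hCm ▸ companion4_nonneg hcoeff, ?_⟩
  rw [hCm, Matrix.charpoly_smul_one_add, hmonic.charpoly_companion4 hdeg, hg, quartic_comp_X_sub_C]

open Polynomial in
/-- Let `σ = (ρ, a+ib, a-ib, 0)` with `b ≠ 0` and `α = (ρ+2a)/4 ≥ 0`. If `4s₂ ≥ s₁²`
(with `s₁ = ρ + 2a`, `s₂ = ρ² + 2(a² - b²)`) and `ρ ≥ 2a`, then the trace-zero monic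
quartic `g` with roots `ρ-α, a-α±ib, -α` has all non-leading coefficients `≤ 0`, its
companion matrix `Cm` is entrywise nonnegative, and `αI₄ + Cm` realizes `σ` (i.e. its
characteristic polynomial is `(x-ρ)(x²-2ax+a²+b²)x`). -/
theorem stmt3 (ρ a b : ℝ) (hb : b ≠ 0) (α : ℝ) (hα : α = (ρ + 2*a)/4) (hα0 : 0 ≤ α)
    (hJLL : 4 * (ρ^2 + 2*(a^2 - b^2)) ≥ (ρ + 2*a)^2) (hρ : ρ ≥ 2*a)
    (g : Polynomial ℝ)
    (hg : g = (X - C (ρ - α)) * (X^2 - C (2*(a - α)) * X + C ((a - α)^2 + b^2)) *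
      (X + C α))
    (Cm : Matrix (Fin 4) (Fin 4) ℝ)
    (hCm : Cm = Matrix.of fun (i j : Fin 4) =>
      if (i : ℕ) = 3 then -g.coeff (j : ℕ)
      else if (j : ℕ) = (i : ℕ) + 1 then 1 else 0) :
    (∀ k < 4, g.coeff k ≤ 0) ∧ (∀ i j, 0 ≤ Cm i j) ∧
    (α • (1 : Matrix (Fin 4) (Fin 4) ℝ) + Cm).charpoly =
      (X - C ρ) * (X^2 - C (2*a) * X + C (a^2 + b^2)) * X :=
  stmt3_general ρ a b α hα hα0 hJLL hρ g hg Cm hCm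
end

section
/- Let σ = (ρ, a+ib, a−ib, 0) with b ≠ 0, α = (ρ+2a)/4 ≥ 0, and suppose σ is realized as αI₄ + C with C a nonnegative trace-zero companion matrix. Then ρ ≥ 2a. -/
/-!
If `p` is the characteristic polynomial of `αI + C`, then `C` has characteristic polynomial
`p(X + α)`, whose coefficient of `X` is `p'(α)`. For a companion matrix this coefficient is
`-c₁`, minus an entry of the matrix, so nonnegativity gives `p'(α) ≤ 0`. At the mean
`α = (ρ + 2a)/4` of the roots of `p = X (X - ρ) ((X - a)² + b²)` one computes
`p'(α) = -(ρ - 2a)(ρ² + 4b²)/8`, and `b ≠ 0` forces `ρ ≥ 2a`.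
-/

open Polynomial

def companion {R : Type*} [Zero R] [One R] (c : Fin 4 → R) : Matrix (Fin 4) (Fin 4) R :=
  Matrix.of fun i j => if (i : ℕ) = 3 then c j else if (j : ℕ) = (i : ℕ) + 1 then 1 else 0

theorem charpoly_companion {R : Type*} [CommRing R] (c : Fin 4 → R) :
    (companion c).charpoly =
      X ^ 4 - C (c 3) * X ^ 3 - C (c 2) * X ^ 2 - C (c 1) * X - C (c 0) := by
  have hcharmatrix : (companion c).charmatrix =
      !![X, -1, 0, 0; 0, X, -1, 0; 0, 0, X, -1; -C (c 0), -C (c 1), -C (c 2), X - C (c 3)] := by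
    ext i j
    fin_cases i <;> fin_cases j <;> simp [companion]
  rw [Matrix.charpoly, hcharmatrix, Matrix.det_succ_row_zero]
  simp [Fin.sum_univ_succ, Matrix.det_fin_three, Fin.succAbove]
  ring

theorem coeff_one_charpoly_companion {R : Type*} [CommRing R] (c : Fin 4 → R) :
    (companion c).charpoly.coeff 1 = -c 1 := by
  rw [charpoly_companion]
  simp [coeff_C]

theorem Matrix.charpoly_eq_taylor_charpoly_smul_one_add {R n : Type*} [CommRing R] [Fintype n]
    [DecidableEq n] (M : Matrix n n R) (α : R) :
    M.charpoly = taylor α (α • 1 + M).charpoly := by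
  rw [taylor_apply, ← Matrix.charpoly_sub_scalar]
  congr 1
  simp [Matrix.smul_one_eq_diagonal]

theorem derivative_eval_at_mean_of_roots (ρ a b : ℝ) :
    ((X - C ρ) * (X ^ 2 - C (2 * a) * X + C (a ^ 2 + b ^ 2)) * X).derivative.eval
        ((ρ + 2 * a) / 4) = -((ρ - 2 * a) * (ρ ^ 2 + 4 * b ^ 2) / 8) := by
  simp only [derivative_mul, derivative_sub, derivative_add, derivative_X, derivative_C,
    derivative_X_pow, eval_add, eval_sub, eval_mul, eval_X, eval_C, eval_pow, eval_one]
  norm_num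
  ring

open Polynomial in
theorem stmt4_general (ρ a b : ℝ) (hb : b ≠ 0) (α : ℝ) (hα : α = (ρ + 2*a)/4)
    (c : Fin 4 → ℝ) (Cm : Matrix (Fin 4) (Fin 4) ℝ)
    (hCm : Cm = Matrix.of fun (i j : Fin 4) =>
      if (i : ℕ) = 3 then c j
      else if (j : ℕ) = (i : ℕ) + 1 then 1 else 0)
    (hpos : ∀ i j, 0 ≤ Cm i j)
    (hchar : (α • (1 : Matrix (Fin 4) (Fin 4) ℝ) + Cm).charpoly =
      (X - C ρ) * (X^2 - C (2*a) * X + C (a^2 + b^2)) * X) :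
    ρ ≥ 2*a := by
  change Cm = companion c at hCm
  have hc1 : c 1 = (ρ - 2 * a) * (ρ ^ 2 + 4 * b ^ 2) / 8 := by
    have h := coeff_one_charpoly_companion c
    rw [← hCm, Cm.charpoly_eq_taylor_charpoly_smul_one_add α, hchar, taylor_coeff_one, hα,
      derivative_eval_at_mean_of_roots] at h
    linarith
  have hc1_nonneg : 0 ≤ c 1 := by simpa [hCm, companion] using hpos 3 1
  have hsq : 0 < ρ ^ 2 + 4 * b ^ 2 := by positivity
  have hprod : 0 ≤ (ρ - 2 * a) * (ρ ^ 2 + 4 * b ^ 2) := by linarith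
  linarith [(mul_nonneg_iff_of_pos_right hsq).mp hprod]

open Polynomial in
/-- If `σ = (ρ, a+ib, a-ib, 0)` (with `b ≠ 0`, `α = (ρ+2a)/4 ≥ 0`) is realized as
`αI₄ + Cm` where `Cm` is a nonnegative trace-zero companion matrix, then `ρ ≥ 2a`. -/
theorem stmt4 (ρ a b : ℝ) (hb : b ≠ 0) (α : ℝ) (hα : α = (ρ + 2*a)/4) (hα0 : 0 ≤ α)
    (c : Fin 4 → ℝ) (Cm : Matrix (Fin 4) (Fin 4) ℝ)
    (hCm : Cm = Matrix.of fun (i j : Fin 4) =>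
      if (i : ℕ) = 3 then c j
      else if (j : ℕ) = (i : ℕ) + 1 then 1 else 0)
    (hpos : ∀ i j, 0 ≤ Cm i j) (htr : Cm.trace = 0)
    (hchar : (α • (1 : Matrix (Fin 4) (Fin 4) ℝ) + Cm).charpoly =
      (X - C ρ) * (X^2 - C (2*a) * X + C (a^2 + b^2)) * X) :
    ρ ≥ 2*a :=
  stmt4_general ρ a b hb α hα c Cm hCm hpos hchar
end

section
/- Let ρ > 0, a > 0, b > 0 with a² + b² = 1, and suppose that for all sufficiently large N the trace-zero monic degree-N polynomial with roots ρ − α, a − α ± ib, and −α (with multiplicity N−3), where α = (ρ+2a)/N, has all non-leading coefficients ≤ 0 (i.e., its companion matrix is nonnegative). Then ρ ≥ 2a. -/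
/-!
The coefficient of `X^(N-4)` is `e₄` of the shifted roots. Since `α = (ρ + 2a)/N`, each term
`α^j * C(N-3, j)` of it is a polynomial in `t = 1/N`, so the coefficient is `F(1/N)` for a
polynomial `F` with `F(0) = (2a - ρ)(2a + ρ)(ρ² + 4b²)/8`. If `ρ < 2a` then `F(0) > 0`, so the
coefficient is positive for all large `N`.
-/

open Polynomial Finset Filter Nat

section

variable {R : Type*} [CommSemiring R]

theorem coeff_X_add_C_pow_sub (α : R) {m j : ℕ} (h : j ≤ m) :
    ((X + C α) ^ m).coeff (m - j) = α ^ j * m.choose j := by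
  rw [coeff_X_add_C_pow, Nat.sub_sub_self h, Nat.choose_symm h]

theorem coeff_cubic_mul_X_add_C_pow_sub_one (c₂ c₁ c₀ α : R) {m : ℕ} (hm : 4 ≤ m) :
    ((X ^ 3 + C c₂ * X ^ 2 + C c₁ * X + C c₀) * (X + C α) ^ m).coeff (m - 1) =
      α ^ 4 * m.choose 4 + c₂ * (α ^ 3 * m.choose 3) + c₁ * (α ^ 2 * m.choose 2)
        + c₀ * (α ^ 1 * m.choose 1) := by
  simp only [add_mul, mul_assoc, coeff_add, coeff_C_mul, coeff_X_pow_mul']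
  rw [if_pos (by omega), if_pos (by omega), show m - 1 - 3 = m - 4 by omega,
    show m - 1 - 2 = m - 3 by omega, coeff_X_add_C_pow_sub _ hm,
    coeff_X_add_C_pow_sub _ (by omega : 3 ≤ m), coeff_X_add_C_pow_sub _ (by omega : 1 ≤ m),
    show m - 1 = m - 2 + 1 by omega, coeff_X_mul, coeff_X_add_C_pow_sub _ (by omega : 2 ≤ m)]

end

theorem X_sub_C_mul_quadratic {R : Type*} [CommRing R] (r p q : R) :
    (X - C r) * (X ^ 2 - C (2 * p) * X + C q) =
      X ^ 3 + C (-(r + 2 * p)) * X ^ 2 + C (q + 2 * p * r) * X + C (-(r * q)) := by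
  simp only [map_neg, map_add, map_mul, map_ofNat]
  ring

/-- `(s/N)^j * C(N-3, j)`, written as a function of `t = 1/N`. -/
noncomputable def scaledChoose (s t : ℝ) (j : ℕ) : ℝ :=
  s ^ j / j ! * ∏ i ∈ range j, (1 - (3 + i) * t)

theorem div_pow_mul_choose_sub_three (s : ℝ) {N j : ℕ} (h : 3 + j ≤ N) :
    (s / N) ^ j * ((N - 3).choose j : ℝ) = scaledChoose s (1 / N) j := by
  have hN : (N : ℝ) ≠ 0 := Nat.cast_ne_zero.mpr (by omega)
  have hdesc : (j ! * (N - 3).choose j : ℝ) = ∏ i ∈ range j, ((N : ℝ) - 3 - i) := by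
    rw [← Nat.cast_mul, ← Nat.descFactorial_eq_factorial_mul_choose,
      Nat.descFactorial_eq_prod_range, Nat.cast_prod]
    refine prod_congr rfl fun i hi => ?_
    rw [mem_range] at hi
    push_cast [Nat.cast_sub (by omega : i ≤ N - 3), Nat.cast_sub (by omega : 3 ≤ N)]
    rfl
  calc (s / N) ^ j * ((N - 3).choose j : ℝ)
      = (∏ _i ∈ range j, s / N) * (∏ i ∈ range j, ((N : ℝ) - 3 - i)) / j ! := by
        rw [← hdesc, ← pow_eq_prod_const]; field_simp
    _ = (∏ _i ∈ range j, s) * (∏ i ∈ range j, (1 - (3 + i) * (1 / N : ℝ))) / j ! := by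
        rw [← prod_mul_distrib, ← prod_mul_distrib]
        congr 1
        refine prod_congr rfl fun i _ => ?_
        field_simp
        ring
    _ = scaledChoose s (1 / N) j := by
        rw [scaledChoose, ← pow_eq_prod_const]; ring

theorem scaledChoose_zero (s : ℝ) (j : ℕ) : scaledChoose s 0 j = s ^ j / j ! := by
  simp [scaledChoose]

/-- The coefficient of `X^(N-4)` in the polynomial of `stmt12`, as a function of `t = 1/N`. -/
noncomputable def fourthCoeff (ρ a b t : ℝ) : ℝ :=
  let r := ρ - (ρ + 2 * a) * t
  let p := a - (ρ + 2 * a) * t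
  scaledChoose (ρ + 2 * a) t 4 - (r + 2 * p) * scaledChoose (ρ + 2 * a) t 3
    + (p ^ 2 + b ^ 2 + 2 * p * r) * scaledChoose (ρ + 2 * a) t 2
    - r * (p ^ 2 + b ^ 2) * scaledChoose (ρ + 2 * a) t 1

theorem continuous_fourthCoeff (ρ a b : ℝ) : Continuous (fourthCoeff ρ a b) := by
  unfold fourthCoeff scaledChoose; fun_prop

theorem fourthCoeff_zero (ρ a b : ℝ) :
    fourthCoeff ρ a b 0 = (2 * a - ρ) * (2 * a + ρ) * (ρ ^ 2 + 4 * b ^ 2) / 8 := by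
  simp only [fourthCoeff, scaledChoose_zero, mul_zero, sub_zero, factorial]
  push_cast
  ring

theorem coeff_sub_four_eq_fourthCoeff (ρ a b : ℝ) {N : ℕ} (hN : 7 ≤ N) :
    (((X - C (ρ - (ρ + 2*a)/(N : ℝ))) *
        (X^2 - C (2*(a - (ρ + 2*a)/(N : ℝ))) * X +
          C ((a - (ρ + 2*a)/(N : ℝ))^2 + b^2)) *
        (X + C ((ρ + 2*a)/(N : ℝ)))^(N - 3) : Polynomial ℝ).coeff (N - 4)) =
      fourthCoeff ρ a b (1 / N) := by
  rw [X_sub_C_mul_quadratic, show N - 4 = N - 3 - 1 by omega,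
    coeff_cubic_mul_X_add_C_pow_sub_one _ _ _ _ (by omega),
    div_pow_mul_choose_sub_three _ (by omega : 3 + 4 ≤ N),
    div_pow_mul_choose_sub_three _ (by omega : 3 + 3 ≤ N),
    div_pow_mul_choose_sub_three _ (by omega : 3 + 2 ≤ N),
    div_pow_mul_choose_sub_three _ (by omega : 3 + 1 ≤ N), fourthCoeff, ← mul_one_div]
  ring

theorem eventually_fourthCoeff_pos {ρ a : ℝ} (b : ℝ) (hρ : 0 < ρ) (hlt : ρ < 2 * a) :
    ∀ᶠ N : ℕ in atTop, 0 < fourthCoeff ρ a b (1 / N) := by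
  have hpos : 0 < fourthCoeff ρ a b 0 := by
    rw [fourthCoeff_zero]
    exact div_pos (mul_pos (mul_pos (sub_pos.mpr hlt) (by linarith)) (by positivity)) (by norm_num)
  exact ((continuous_fourthCoeff ρ a b).tendsto 0 |>.comp
    tendsto_one_div_atTop_nhds_zero_nat).eventually (eventually_gt_nhds hpos)

open Polynomial in
theorem stmt12_general (ρ a b : ℝ) (hρ : 0 < ρ)
    (h : ∃ N₀ : ℕ, ∀ N : ℕ, N₀ ≤ N → ∀ k < N,
      (((X - C (ρ - (ρ + 2*a)/(N : ℝ))) *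
        (X^2 - C (2*(a - (ρ + 2*a)/(N : ℝ))) * X +
          C ((a - (ρ + 2*a)/(N : ℝ))^2 + b^2)) *
        (X + C ((ρ + 2*a)/(N : ℝ)))^(N - 3) : Polynomial ℝ).coeff k) ≤ 0) :
    ρ ≥ 2*a := by
  by_contra! hlt
  obtain ⟨N₀, h⟩ := h
  obtain ⟨N, hpos, hN⟩ :=
    ((eventually_fourthCoeff_pos b hρ hlt).and (eventually_ge_atTop (max N₀ 7))).exists
  have hle := h N (le_of_max_le_left hN) (N - 4) (by omega)
  rw [coeff_sub_four_eq_fourthCoeff ρ a b (le_of_max_le_right hN)] at hle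
  linarith

open Polynomial in
/-- Let `ρ > 0`, `a > 0`, `b > 0` with `a² + b² = 1`. If for all sufficiently large
`N` the trace-zero monic degree-`N` polynomial with roots `ρ-α`, `a-α±ib` and `-α`
(with multiplicity `N-3`), where `α = (ρ+2a)/N`, has all non-leading coefficients
`≤ 0` (i.e. its companion matrix is nonnegative), then `ρ ≥ 2a`. -/
theorem stmt12 (ρ a b : ℝ) (hρ : 0 < ρ) (ha : 0 < a) (hb : 0 < b)
    (hab : a^2 + b^2 = 1)
    (h : ∃ N₀ : ℕ, ∀ N : ℕ, N₀ ≤ N → ∀ k < N,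
      (((X - C (ρ - (ρ + 2*a)/(N : ℝ))) *
        (X^2 - C (2*(a - (ρ + 2*a)/(N : ℝ))) * X +
          C ((a - (ρ + 2*a)/(N : ℝ))^2 + b^2)) *
        (X + C ((ρ + 2*a)/(N : ℝ)))^(N - 3) : Polynomial ℝ).coeff k) ≤ 0) :
    ρ ≥ 2*a :=
  stmt12_general ρ a b hρ h
end

section
/- Let τ = (μ₁,…,μₙ) be complex numbers with power sums x_k = μ₁^k + ⋯ + μₙ^k and q(x) = ∏(x − μᵢ) = x^n + q₁x^{n−1} + ⋯ + qₙ. Then the n×n matrix Xₙ with (i,j) entry x_{i−j+1} for i ≥ j, entry j on the superdiagonal position (j, j+1), and zeros above the superdiagonal, has characteristic polynomial x^n + n·q₁·x^{n−1} + n(n−1)·q₂·x^{n−2} + ⋯ + n!·qₙ. -/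
/-!
Write `Q(s) = ∏ⱼ (1 - μⱼ s) = ∑ qᵢ sⁱ` and let `G(s) = Q(s) e^{ts}`, a power series whose
coefficients are polynomials in `t`; then `k! [sᵏ] G = ∑ᵢ k(k-1)⋯(k-i+1) qᵢ t^{k-i}`.
Logarithmic differentiation gives Newton's identities in the form `Q' = -P Q` with
`P(s) = ∑ₘ x_{m+1} sᵐ`, hence `G' = (t - P) G`, i.e.
`(k+1) G_{k+1} = t G_k - ∑_{j ≤ k} x_{k-j+1} G_j`.
On the other side `t - Xₙ` is lower Hessenberg, and expanding its leading principal minors `d_k`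
along the last row gives `d_{k+1} = t d_k - ∑_{j ≤ k} x_{k-j+1} (k!/j!) d_j`, the same recurrence
for `d_k / k!`. Hence `d_n = n! G_n`.
-/

open Finset

theorem Nat.prod_Ico_add_one_mul_factorial {j k : ℕ} (hjk : j ≤ k) :
    (∏ m ∈ Ico j k, (m + 1)) * j.factorial = k.factorial := by
  induction k, hjk using Nat.le_induction with
  | base => simp
  | succ k hjk ih =>
    rw [prod_Ico_succ_top hjk, mul_right_comm, ih, Nat.factorial_succ, mul_comm]

theorem Fin.val_succAbove {k : ℕ} (j : Fin (k + 1)) (c : Fin k) :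
    (j.succAbove c : ℕ) = if (c : ℕ) < j then (c : ℕ) else (c : ℕ) + 1 := by
  simp only [Fin.succAbove, Fin.lt_def, Fin.val_castSucc]
  split_ifs <;> rfl

namespace Matrix
variable {R : Type*} [CommRing R]

def leadingMinor (A : Matrix ℕ ℕ R) (k : ℕ) : R :=
  (A.submatrix (Fin.val : Fin k → ℕ) Fin.val).det

def IsLowerHessenberg (A : Matrix ℕ ℕ R) : Prop := ∀ i j, i + 1 < j → A i j = 0

theorem charpoly_submatrix_val (N : Matrix ℕ ℕ R) (k : ℕ) :
    (N.submatrix (Fin.val : Fin k → ℕ) Fin.val).charpoly =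
      (diagonal (fun _ => Polynomial.X) - N.map Polynomial.C).leadingMinor k := by
  rw [charpoly, leadingMinor]
  congr 1 with i j
  simp [charmatrix_apply, diagonal_apply, Fin.val_inj]

namespace IsLowerHessenberg
variable {A : Matrix ℕ ℕ R} (hA : A.IsLowerHessenberg)
include hA

/-- Only the last entry of the last column is nonzero, so expanding along it peels off
`A (k - 1) k`. -/
theorem det_submatrix_skip {j k : ℕ} (hjk : j ≤ k) :
    (A.submatrix (Fin.val : Fin k → ℕ)
        (fun c : Fin k => if (c : ℕ) < j then (c : ℕ) else (c : ℕ) + 1)).det =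
      A.leadingMinor j * ∏ m ∈ Ico j k, A m (m + 1) := by
  induction k, hjk using Nat.le_induction with
  | base =>
    simp only [Ico_self, prod_empty, mul_one, leadingMinor]
    congr 2 with c
    simp
  | succ k hjk ih =>
    rw [det_succ_column _ (Fin.last k), Fintype.sum_eq_single (Fin.last k),
      prod_Ico_succ_top hjk]
    · rw [Fin.succAbove_last, submatrix_submatrix]
      simp only [Function.comp_def, Fin.val_castSucc, submatrix_apply, Fin.val_last, ih,
        if_neg (Nat.not_lt.2 hjk), Even.neg_one_pow ⟨k, rfl⟩]
      ring
    · intro r hr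
      have hrk : (r : ℕ) < k := Fin.val_lt_last hr
      simp [Nat.not_lt.2 hjk, hA r (k + 1) (by omega)]

theorem leadingMinor_succ (k : ℕ) :
    A.leadingMinor (k + 1) =
      ∑ j ∈ range (k + 1), A k j * (∏ m ∈ Ico j k, -A m (m + 1)) * A.leadingMinor j := by
  rw [leadingMinor, det_succ_row _ (Fin.last k), ← Fin.sum_univ_eq_sum_range]
  refine Fintype.sum_congr _ _ fun j => ?_
  have hj : (j : ℕ) ≤ k := Fin.is_le j
  have hcols : Fin.val ∘ j.succAbove =
      fun c : Fin k => if (c : ℕ) < j then (c : ℕ) else (c : ℕ) + 1 :=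
    funext (Fin.val_succAbove j)
  have hsign : (-1 : R) ^ (k + j) = (-1) ^ (k - j) := by
    rw [show k + j = k - j + 2 * j by omega, pow_add, pow_mul, neg_one_sq, one_pow, mul_one]
  rw [submatrix_submatrix, Fin.succAbove_last, hcols]
  simp only [Function.comp_def, Fin.val_castSucc]
  rw [hA.det_submatrix_skip hj, prod_neg, Nat.card_Ico, submatrix_apply, Fin.val_last, hsign]
  ring

end IsLowerHessenberg
end Matrix

namespace Polynomial
variable {R : Type*} [CommRing R]

theorem reflect_one_X_sub_C (a : R) : reflect 1 (X - C a) = 1 - C a * X := by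
  have hX : reflect 1 (X : R[X]) = 1 := by simp
  rw [reflect_sub, reflect_C, hX, pow_one]

theorem reflect_prod_X_sub_C {ι : Type*} (μ : ι → R) (s : Finset ι) :
    reflect #s (∏ j ∈ s, (X - C (μ j))) = ∏ j ∈ s, (1 - C (μ j) * X) := by
  classical
  induction s using Finset.induction_on with
  | empty => simp
  | insert a s ha ih =>
    have hdeg : (∏ j ∈ s, (X - C (μ j))).natDegree ≤ #s :=
      (natDegree_prod_le _ _).trans <| by
        simpa using sum_le_card_nsmul s _ 1 fun j _ => natDegree_X_sub_C_le (μ j)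
    rw [prod_insert ha, prod_insert ha, card_insert_of_notMem ha, add_comm,
      reflect_mul _ _ (natDegree_X_sub_C_le _) hdeg, ih, reflect_one_X_sub_C]

end Polynomial

namespace PowerSeries
variable {R : Type*} [CommRing R]

theorem one_sub_C_mul_X_mul_mk_pow (a : R) : (1 - C a * X) * mk (a ^ ·) = 1 := by
  simpa [rescale_mk, mul_comm] using congrArg (rescale a) (mk_one_mul_one_sub_eq_one (S := R))

theorem derivative_prod_one_sub_C_mul_X {ι : Type*} (μ : ι → R) (s : Finset ι) :
    derivative R (∏ j ∈ s, (1 - C (μ j) * X)) =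
      -mk (fun m => ∑ j ∈ s, μ j ^ (m + 1)) * ∏ j ∈ s, (1 - C (μ j) * X) := by
  classical
  induction s using Finset.induction_on with
  | empty => ext; simp
  | insert a s ha ih =>
    have hP : mk (fun m => ∑ j ∈ insert a s, μ j ^ (m + 1)) =
        C (μ a) * mk (μ a ^ ·) + mk (fun m => ∑ j ∈ s, μ j ^ (m + 1)) := by
      ext m
      simp [sum_insert ha, pow_succ', mul_comm]
    rw [prod_insert ha, Derivation.leibniz, ih, hP]
    simp only [map_sub, Derivation.map_one_eq_zero, Derivation.leibniz, derivative_C,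
      derivative_X, smul_eq_mul]
    linear_combination (C (μ a) * ∏ j ∈ s, (1 - C (μ j) * X)) * one_sub_C_mul_X_mul_mk_pow (μ a)

theorem coeff_prod_one_sub_C_mul_X {ι : Type*} (μ : ι → R) (s : Finset ι) {i : ℕ}
    (hi : i ≤ #s) :
    coeff i (∏ j ∈ s, (1 - C (μ j) * X)) =
      (∏ j ∈ s, (Polynomial.X - Polynomial.C (μ j))).coeff (#s - i) := by
  have hcoe : ∏ j ∈ s, (1 - C (μ j) * X) =
      ((∏ j ∈ s, (1 - Polynomial.C (μ j) * Polynomial.X) : Polynomial R) : PowerSeries R) := by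
    rw [← Polynomial.coeToPowerSeries.ringHom_apply, map_prod]
    simp
  rw [hcoe, Polynomial.coeff_coe, ← Polynomial.reflect_prod_X_sub_C, Polynomial.coeff_reflect,
    Polynomial.revAt_le hi]

theorem derivative_rescale_exp [Algebra ℚ R] (t : R) :
    derivative R (rescale t (exp R)) = C t * rescale t (exp R) := by
  ext m
  rw [coeff_derivative, coeff_C_mul, coeff_rescale, coeff_rescale, coeff_exp, coeff_exp,
    ← map_natCast (algebraMap ℚ R), ← map_one (algebraMap ℚ R), ← map_add]
  have hfac : 1 / ((m + 1).factorial : ℚ) * (m + 1) = 1 / m.factorial := by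
    rw [Nat.factorial_succ]
    push_cast
    field_simp
  rw [mul_assoc, ← map_mul, hfac, pow_succ', mul_assoc]

theorem constantCoeff_rescale_exp [Algebra ℚ R] (t : R) :
    constantCoeff (rescale t (exp R)) = 1 := by
  rw [← coeff_zero_eq_constantCoeff_apply, coeff_rescale, coeff_exp]
  simp

end PowerSeries

/-- The infinite matrix whose leading `n × n` block is `Xₙ`, indexed from `0`. -/
def newtonMatrix {R : Type*} [CommRing R] (x : ℕ → R) : Matrix ℕ ℕ R :=
  Matrix.of fun i j => if j ≤ i then x (i - j + 1) else if j = i + 1 then ((i + 1 : ℕ) : R) else 0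

namespace newtonMatrix

section GeneratingSeries
open PowerSeries
variable {S ι : Type*} [CommRing S] [Algebra ℚ S] [Fintype ι] (μ : ι → S) (t : S)

noncomputable def genSeries : PowerSeries S := (∏ j, (1 - C (μ j) * X)) * rescale t (exp S)

theorem derivative_genSeries : derivative S (genSeries μ t) =
    (C t - PowerSeries.mk fun m => ∑ j, μ j ^ (m + 1)) * genSeries μ t := by
  rw [genSeries, Derivation.leibniz, derivative_rescale_exp, derivative_prod_one_sub_C_mul_X]
  simp only [smul_eq_mul]
  ring

theorem coeff_genSeries_succ (k : ℕ) :
    (k + 1 : ℕ) * coeff (k + 1) (genSeries μ t) =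
      t * coeff k (genSeries μ t) -
        ∑ j ∈ range (k + 1), (∑ i, μ i ^ (k - j + 1)) * coeff j (genSeries μ t) := by
  have hk := congrArg (coeff k) (derivative_genSeries μ t)
  rw [coeff_derivative, sub_mul, map_sub, coeff_C_mul, mul_comm (PowerSeries.mk _), coeff_mul,
    Nat.sum_antidiagonal_eq_sum_range_succ_mk] at hk
  simp only [coeff_mk, mul_comm (coeff _ (genSeries μ t))] at hk
  push_cast
  exact hk

theorem factorial_mul_coeff_genSeries (k : ℕ) :
    (k.factorial : S) * coeff k (genSeries μ t) = ∑ i ∈ range (k + 1),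
      (k.descFactorial i : S) * coeff i (∏ j, (1 - C (μ j) * X)) * t ^ (k - i) := by
  rw [genSeries, coeff_mul, Nat.sum_antidiagonal_eq_sum_range_succ_mk, mul_sum]
  refine sum_congr rfl fun i hi => ?_
  have hik : i ≤ k := Nat.lt_succ_iff.mp (mem_range.mp hi)
  have hdesc : (k.factorial : ℚ) * (1 / (k - i).factorial) = k.descFactorial i := by
    rw [← Nat.factorial_mul_descFactorial hik]
    push_cast
    field_simp
  rw [coeff_rescale, coeff_exp, ← map_natCast (algebraMap ℚ S), ← map_natCast (algebraMap ℚ S),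
    ← hdesc, map_mul]
  ring

end GeneratingSeries

section CharMatrix
open Polynomial Matrix
variable {R : Type*} [CommRing R]

noncomputable def charmatrix (x : ℕ → R) : Matrix ℕ ℕ R[X] :=
  diagonal (fun _ => X) - (newtonMatrix x).map C

theorem isLowerHessenberg_charmatrix (x : ℕ → R) : (charmatrix x).IsLowerHessenberg := by
  intro i j hij
  simp [charmatrix, newtonMatrix, show ¬ j ≤ i by omega, show j ≠ i + 1 by omega,
    show i ≠ j by omega]

theorem charmatrix_apply_of_le (x : ℕ → R) {i j : ℕ} (hji : j ≤ i) :
    charmatrix x i j = (if i = j then X else 0) - C (x (i - j + 1)) := by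
  simp [charmatrix, newtonMatrix, diagonal_apply, hji]

theorem neg_charmatrix_apply_succ (x : ℕ → R) (i : ℕ) :
    -charmatrix x i (i + 1) = ((i + 1 : ℕ) : R[X]) := by
  simp [charmatrix, newtonMatrix]

variable [Algebra ℚ R] {ι : Type*} [Fintype ι] (μ : ι → R) {x : ℕ → R}
  (hx : ∀ k, x k = ∑ j, μ j ^ k)
include hx

theorem sum_charmatrix_mul_coeff_genSeries (k : ℕ) :
    ∑ j ∈ range (k + 1), charmatrix x k j * PowerSeries.coeff j (genSeries (C ∘ μ) X) =
      (k + 1 : ℕ) * PowerSeries.coeff (k + 1) (genSeries (C ∘ μ) X) := by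
  rw [coeff_genSeries_succ]
  simp only [Function.comp_apply, ← map_pow, ← map_sum, ← hx]
  rw [sum_congr rfl fun j hj =>
    by rw [charmatrix_apply_of_le x (Nat.le_of_lt_succ (mem_range.1 hj))]]
  simp [sub_mul, sum_sub_distrib, ite_mul]

theorem leadingMinor_charmatrix (k : ℕ) :
    (charmatrix x).leadingMinor k =
      (k.factorial : R[X]) * PowerSeries.coeff k (genSeries (C ∘ μ) X) := by
  induction k using Nat.strong_induction_on with
  | _ k ih =>
  cases k with
  | zero => simp [leadingMinor, genSeries, PowerSeries.constantCoeff_rescale_exp]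
  | succ k =>
    have hterm : ∀ j ∈ range (k + 1),
        charmatrix x k j * (∏ m ∈ Ico j k, -charmatrix x m (m + 1)) *
            (charmatrix x).leadingMinor j =
          k.factorial * (charmatrix x k j * PowerSeries.coeff j (genSeries (C ∘ μ) X)) := by
      intro j hj
      have hjk : j ≤ k := Nat.le_of_lt_succ (mem_range.1 hj)
      simp only [neg_charmatrix_apply_succ, ih j (by omega), ← Nat.cast_prod,
        ← Nat.prod_Ico_add_one_mul_factorial hjk]
      push_cast
      ring
    rw [(isLowerHessenberg_charmatrix x).leadingMinor_succ, sum_congr rfl hterm, ← mul_sum,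
      sum_charmatrix_mul_coeff_genSeries μ hx, Nat.factorial_succ]
    push_cast
    ring

end CharMatrix
end newtonMatrix

open Polynomial in
theorem stmt13_general (n : ℕ) (τ : Fin n → ℂ)
    (x : ℕ → ℂ) (hx : ∀ k, x k = ∑ i, τ i ^ k)
    (q : Polynomial ℂ) (hq : q = ∏ i, (X - C (τ i)))
    (M : Matrix (Fin n) (Fin n) ℂ)
    (hM : M = Matrix.of fun (i j : Fin n) =>
      if (j : ℕ) ≤ (i : ℕ) then x ((i : ℕ) - (j : ℕ) + 1)
      else if (j : ℕ) = (i : ℕ) + 1 then (((i : ℕ) + 1 : ℕ) : ℂ) else 0) :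
    M.charpoly = ∑ i ∈ Finset.range (n + 1),
      C ((n.descFactorial i : ℂ) * q.coeff (n - i)) * X^(n - i) := by
  have hMN : M = (newtonMatrix x).submatrix Fin.val Fin.val := hM
  rw [hMN, Matrix.charpoly_submatrix_val, ← newtonMatrix.charmatrix,
    newtonMatrix.leadingMinor_charmatrix τ hx, newtonMatrix.factorial_mul_coeff_genSeries]
  refine sum_congr rfl fun i hi => ?_
  have hin : i ≤ #(univ : Finset (Fin n)) := by simpa [Nat.lt_succ_iff] using hi
  have hmap : ∏ j, (X - C ((C ∘ τ) j)) = q.map C := by simp [hq, Polynomial.map_prod]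
  rw [PowerSeries.coeff_prod_one_sub_C_mul_X _ _ hin, hmap, coeff_map, card_univ,
    Fintype.card_fin, C_mul, map_natCast]

open Polynomial in
/-- For `τ = (μ₁,…,μₙ)` with power sums `x k = ∑ μᵢ^k` and
`q(x) = ∏ (x - μᵢ) = xⁿ + q₁xⁿ⁻¹ + ⋯ + qₙ`, the matrix `M` with `(i,j)` entry
`x_{i-j+1}` for `i ≥ j`, entry `j` at superdiagonal position `(j, j+1)` (1-indexed)
and zeros above the superdiagonal, has characteristic polynomial
`xⁿ + n·q₁·xⁿ⁻¹ + n(n-1)·q₂·xⁿ⁻² + ⋯ + n!·qₙ`. -/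
theorem stmt13 (n : ℕ) (hn : 0 < n) (τ : Fin n → ℂ)
    (x : ℕ → ℂ) (hx : ∀ k, x k = ∑ i, τ i ^ k)
    (q : Polynomial ℂ) (hq : q = ∏ i, (X - C (τ i)))
    (M : Matrix (Fin n) (Fin n) ℂ)
    (hM : M = Matrix.of fun (i j : Fin n) =>
      if (j : ℕ) ≤ (i : ℕ) then x ((i : ℕ) - (j : ℕ) + 1)
      else if (j : ℕ) = (i : ℕ) + 1 then (((i : ℕ) + 1 : ℕ) : ℂ) else 0) :
    M.charpoly = ∑ i ∈ Finset.range (n + 1),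
      C ((n.descFactorial i : ℂ) * q.coeff (n - i)) * X^(n - i) :=
  stmt13_general n τ x hx q hq M hM
end

section
/- The 4×4 matrix [[1.013005334, 1, 0, 0], [0, 1.041605274, 1, 0], [0, 0, 1.041605274, 1], [0.000326227, 0, 0, 0.000296825]] is nonnegative, and its characteristic polynomial approximates (x − 1.1)(x² − 2cos(0.0188π)x + 1)·x; in particular a nonnegative 4×4 matrix with spectrum (1.1, e^{±0.0188πi}, 0) exists of this bidiagonal-plus-corner form. -/
/-!
The characteristic polynomial of the bidiagonal matrix with diagonal `(a, b, b, f)` and corner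
entry `e` is `(X - a)(X - b)²(X - f) - e`. So for `P = (X - r)(X² - 2cX + 1)X` it suffices to
find a critical point `b ≥ 0` of `P` such that the quadratic cofactor `(P - P(b)) / (X - b)²` has
two nonnegative real roots `a, f`; then `e = -P(b) = a b² f ≥ 0`. For `r = 1.1` and
`c = cos(0.0188π)` the intermediate value theorem gives `b ∈ [1.035, 1.05]`, and the conditions
on the cofactor reduce to polynomial inequalities in `b` and `c`.
-/

open Polynomial

theorem Matrix.charpoly_bidiagonal_add_corner {R : Type*} [CommRing R] (a b c d e : R) :
    (!![a, 1, 0, 0; 0, b, 1, 0; 0, 0, c, 1; e, 0, 0, d] : Matrix (Fin 4) (Fin 4) R).charpoly =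
      (X - C a) * (X - C b) * (X - C c) * (X - C d) - C e := by
  simp [Matrix.charpoly, Matrix.det_succ_row_zero, Fin.sum_univ_succ, Fin.succAbove]
  ring

theorem exists_nonneg_add_eq_mul_eq {s q : ℝ} (hs : 0 ≤ s) (hq : 0 ≤ q) (hdisc : 4 * q ≤ s ^ 2) :
    ∃ a f : ℝ, 0 ≤ a ∧ 0 ≤ f ∧ a + f = s ∧ a * f = q := by
  set δ := √(s ^ 2 - 4 * q)
  have hδ : δ ^ 2 = s ^ 2 - 4 * q := Real.sq_sqrt (by linarith)
  have hδs : δ ≤ s := Real.sqrt_le_iff.2 ⟨hs, by linarith⟩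
  exact ⟨(s + δ) / 2, (s - δ) / 2, by positivity, by linarith, by ring, by linear_combination -hδ / 4⟩

section Quartic

variable {r c : ℝ}

theorem eval_derivative_quartic (t : ℝ) :
    (derivative ((X - C r) * (X ^ 2 - C (2 * c) * X + 1) * X)).eval t =
      4 * t ^ 3 - 3 * (r + 2 * c) * t ^ 2 + 2 * (1 + 2 * r * c) * t - r := by
  simp only [derivative_mul, derivative_sub, derivative_add, derivative_X, derivative_C,
    derivative_X_pow, derivative_one, eval_add, eval_sub, eval_mul, eval_pow, eval_X, eval_C,
    eval_one, eval_zero]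
  ring

theorem quartic_eq_of_isRoot_derivative {a b f : ℝ}
    (hb : (derivative ((X - C r) * (X ^ 2 - C (2 * c) * X + 1) * X)).IsRoot b)
    (hsum : a + f = r + 2 * c - 2 * b)
    (hprod : a * f = 1 + 2 * r * c - 2 * (r + 2 * c) * b + 3 * b ^ 2) :
    (X - C r) * (X ^ 2 - C (2 * c) * X + 1) * X =
      (X - C a) * (X - C b) * (X - C b) * (X - C f) - C (a * b ^ 2 * f) := by
  rw [IsRoot, eval_derivative_quartic] at hb
  refine Polynomial.funext fun x ↦ ?_
  simp only [eval_mul, eval_sub, eval_add, eval_pow, eval_X, eval_C, eval_one]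
  linear_combination
    (x ^ 3 - 2 * b * x ^ 2 + b ^ 2 * x) * hsum + (2 * b * x - x ^ 2) * hprod + x * hb

theorem exists_nonneg_charpoly_eq_quartic {b : ℝ} (hb₀ : 0 ≤ b)
    (hb : (derivative ((X - C r) * (X ^ 2 - C (2 * c) * X + 1) * X)).IsRoot b)
    (hsum : 0 ≤ r + 2 * c - 2 * b)
    (hprod : 0 ≤ 1 + 2 * r * c - 2 * (r + 2 * c) * b + 3 * b ^ 2)
    (hdisc : 4 * (1 + 2 * r * c - 2 * (r + 2 * c) * b + 3 * b ^ 2) ≤ (r + 2 * c - 2 * b) ^ 2) :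
    ∃ d₁ d₂ c₁ c₂ : ℝ, 0 ≤ d₁ ∧ 0 ≤ d₂ ∧ 0 ≤ c₁ ∧ 0 ≤ c₂ ∧
      (!![d₁, 1, 0, 0; 0, d₂, 1, 0; 0, 0, d₂, 1; c₁, 0, 0, c₂] :
          Matrix (Fin 4) (Fin 4) ℝ).charpoly =
        (X - C r) * (X ^ 2 - C (2 * c) * X + 1) * X := by
  obtain ⟨a, f, ha, hf, haf, haf'⟩ := exists_nonneg_add_eq_mul_eq hsum hprod hdisc
  refine ⟨a, b, a * b ^ 2 * f, f, ha, hb₀, by positivity, hf, ?_⟩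
  rw [Matrix.charpoly_bidiagonal_add_corner, quartic_eq_of_isRoot_derivative hb haf haf']

theorem exists_isRoot_derivative_mem_Icc (hc : c ∈ Set.Icc 0.998255 0.9982565) :
    ∃ b ∈ Set.Icc (1.035 : ℝ) 1.05,
      (derivative ((X - C 1.1) * (X ^ 2 - C (2 * c) * X + 1) * X)).IsRoot b := by
  obtain ⟨hc₁, hc₂⟩ := hc
  refine intermediate_value_Icc (by norm_num : (1.035 : ℝ) ≤ 1.05)
    (derivative ((X - C 1.1) * (X ^ 2 - C (2 * c) * X + 1) * X)).continuous.continuousOn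
    ⟨?_, ?_⟩
  · rw [eval_derivative_quartic]; nlinarith
  · rw [eval_derivative_quartic]; nlinarith

end Quartic

theorem cos_0188_mul_pi_mem_Icc : Real.cos (0.0188 * Real.pi) ∈ Set.Icc 0.998255 0.9982565 := by
  have hπ₁ := Real.pi_gt_d6
  have hπ₂ := Real.pi_lt_d6
  have hx₀ : (0 : ℝ) ≤ 0.0188 * Real.pi := by positivity
  have hx₁ : |0.0188 * Real.pi| ≤ 1 := by rw [abs_of_nonneg hx₀]; linarith
  have hsq : (0.0188 * Real.pi) ^ 2 ≤ 0.0034884 := by nlinarith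
  have hsq' : (0.0034883 : ℝ) ≤ (0.0188 * Real.pi) ^ 2 := by nlinarith
  have hupper := (abs_le.1 (Real.cos_bound hx₁)).2
  rw [abs_of_nonneg hx₀] at hupper
  constructor
  · linarith [Real.one_sub_sq_div_two_le_cos (x := 0.0188 * Real.pi)]
  · nlinarith [pow_le_pow_left₀ (by positivity) hsq 2]

open Polynomial in
/-- The given 4×4 matrix is entrywise nonnegative, and there exist nonnegative reals
`d₁, d₂, c₁, c₂` such that the matrix of the same bidiagonal-plus-corner shape has
characteristic polynomial exactly `(x - 1.1)(x² - 2cos(0.0188π)x + 1)x`; in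
particular a nonnegative 4×4 matrix with spectrum `(1.1, e^{±0.0188πi}, 0)` exists
of this form. -/
theorem stmt14 :
    (∀ i j, 0 ≤ (!![1.013005334, 1, 0, 0;
                    0, 1.041605274, 1, 0;
                    0, 0, 1.041605274, 1;
                    0.000326227, 0, 0, 0.000296825] : Matrix (Fin 4) (Fin 4) ℝ) i j) ∧
    ∃ d₁ d₂ c₁ c₂ : ℝ, 0 ≤ d₁ ∧ 0 ≤ d₂ ∧ 0 ≤ c₁ ∧ 0 ≤ c₂ ∧
      (!![d₁, 1, 0, 0; 0, d₂, 1, 0; 0, 0, d₂, 1; c₁, 0, 0, c₂] :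
          Matrix (Fin 4) (Fin 4) ℝ).charpoly =
        (X - C 1.1) * (X^2 - C (2 * Real.cos (0.0188 * Real.pi)) * X + 1) * X := by
  refine ⟨fun i j ↦ by fin_cases i <;> fin_cases j <;> norm_num, ?_⟩
  obtain ⟨hc₁, hc₂⟩ := cos_0188_mul_pi_mem_Icc
  obtain ⟨b, ⟨hb₁, hb₂⟩, hb⟩ := exists_isRoot_derivative_mem_Icc cos_0188_mul_pi_mem_Icc
  refine exists_nonneg_charpoly_eq_quartic (by linarith) hb (by linarith) ?_ (by nlinarith)
  nlinarith [sq_nonneg (3 * b - (1.1 + 2 * Real.cos (0.0188 * Real.pi)))]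
end

section
/- Let ρ = 1.4, a = 0.95, b = √(1 − 0.95²), f(x) = (x−ρ)(x² − 2ax + 1) = x³ − 3.3x² + 3.66x − 1.4. Then for every nonnegative integer N, setting α = (2a+ρ)/(N+3), the polynomial (y+α)^N f(y+α) has at least one positive coefficient besides the leading one; hence x^N f(x) is not realizable by αI + C with C a nonnegative trace-zero companion matrix for any N. -/
/-!
The shift `α = 3.3/(N+3)` kills the coefficient of `y^(N+2)` in `(y+α)^N f(y+α)`, but not the
one of `y^(N-1)`: expanding `(y+α)^(N+3) - 3.3 (y+α)^(N+2) + 3.66 (y+α)^(N+1) - 1.4 (y+α)^N`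
binomially, for `N = m + 2` that coefficient is the rational function
`33 (1175 m³ + 25287 m² + 59310 m + 26872) / (80000 (m+5)³)`, which is positive.
For `N = 0, 1` the coefficient of `y` is positive instead.
-/

open Polynomial

section CommRing

variable {R : Type*} [CommRing R]

theorem pow_mul_comp_X_add_C_cubic (α p q r : R) (N : ℕ) :
    (X + C α) ^ N * (X ^ 3 - C p * X ^ 2 + C q * X - C r).comp (X + C α) =
      (X + C α) ^ (N + 3) - C p * (X + C α) ^ (N + 2) + C q * (X + C α) ^ (N + 1) -
        C r * (X + C α) ^ N := by
  simp only [sub_comp, add_comp, mul_comp, pow_comp, X_comp, C_comp]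
  ring

theorem coeff_X_add_C_pow_add (α : R) (k d : ℕ) :
    ((X + C α) ^ (k + d)).coeff k = α ^ d * ((k + d).choose d : R) := by
  rw [coeff_X_add_C_pow, Nat.add_sub_cancel_left, Nat.choose_symm_add]

theorem coeff_pow_mul_comp_X_add_C_cubic (α p q r : R) (k : ℕ) :
    ((X + C α) ^ (k + 1) * (X ^ 3 - C p * X ^ 2 + C q * X - C r).comp (X + C α)).coeff k =
      α ^ 4 * ((k + 4).choose 4 : R) - p * (α ^ 3 * ((k + 3).choose 3 : R)) +
        q * (α ^ 2 * ((k + 2).choose 2 : R)) - r * (α ^ 1 * ((k + 1).choose 1 : R)) := by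
  simp only [pow_mul_comp_X_add_C_cubic, coeff_sub, coeff_add, coeff_C_mul,
    show ∀ j, k + 1 + j = k + (j + 1) from fun j => by omega, coeff_X_add_C_pow_add]

end CommRing

theorem cast_choose_add_eq_ascPochhammer_div {K : Type*} [Field K] [CharZero K] (k d : ℕ) :
    ((k + d).choose d : K) = (ascPochhammer K d).eval ((k : K) + 1) / d.factorial := by
  rcases d with _ | d
  · simp
  · rw [Nat.cast_choose_eq_ascPochhammer_div, Nat.add_sub_cancel,
      show k + (d + 1) - d = k + 1 by omega, Nat.cast_succ]

theorem shifted_coeff_one_pos {N : ℕ} (hN : N ≤ 1) :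
    0 < ((X + C (3.3 / ((N : ℝ) + 3))) ^ N *
      (X ^ 3 - C 3.3 * X ^ 2 + C 3.66 * X - C 1.4 : ℝ[X]).comp
        (X + C (3.3 / ((N : ℝ) + 3)))).coeff 1 := by
  interval_cases N <;>
  · simp only [pow_mul_comp_X_add_C_cubic, coeff_sub, coeff_add, coeff_C_mul, coeff_X_add_C_pow]
    norm_num

theorem shifted_coeff_pred_pos {N : ℕ} (hN : 2 ≤ N) :
    0 < ((X + C (3.3 / ((N : ℝ) + 3))) ^ N *
      (X ^ 3 - C 3.3 * X ^ 2 + C 3.66 * X - C 1.4 : ℝ[X]).comp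
        (X + C (3.3 / ((N : ℝ) + 3)))).coeff (N - 1) := by
  obtain ⟨m, rfl⟩ : ∃ m, N = m + 2 := ⟨N - 2, by omega⟩
  rw [show m + 2 - 1 = m + 1 by omega, coeff_pow_mul_comp_X_add_C_cubic]
  simp only [cast_choose_add_eq_ascPochhammer_div, ascPochhammer_succ_eval, ascPochhammer_zero,
    eval_one, Nat.factorial]
  push_cast
  convert_to 0 < 33 * (1175 * (m : ℝ) ^ 3 + 25287 * m ^ 2 + 59310 * m + 26872) /
    (80000 * ((m : ℝ) + 5) ^ 3) using 1
  · field_simp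
    ring
  · positivity

open Polynomial in
/-- For `ρ = 1.4`, `a = 0.95`, `f(x) = (x-ρ)(x²-2ax+1) = x³ - 3.3x² + 3.66x - 1.4`:
for every `N ≥ 0`, with `α = (2a+ρ)/(N+3)`, the shifted polynomial
`(y+α)^N f(y+α)` has at least one positive coefficient besides the leading one; hence
`x^N f(x)` is not realizable by `αI + C` with `C` a nonnegative trace-zero companion
matrix for any `N`. -/
theorem stmt15 (ρ a : ℝ) (hρ : ρ = 1.4) (ha : a = 0.95)
    (f : Polynomial ℝ) (hf : f = X^3 - C 3.3 * X^2 + C 3.66 * X - C 1.4) :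
    f = (X - C ρ) * (X^2 - C (2*a) * X + 1) ∧
    ∀ N : ℕ, ∃ k < N + 3,
      0 < (((X + C ((2*a + ρ)/((N : ℝ) + 3)))^N *
        (f.comp (X + C ((2*a + ρ)/((N : ℝ) + 3))))).coeff k) := by
  subst hρ ha hf
  refine ⟨?_, fun N => ?_⟩
  · rw [show (3.3 : ℝ) = 1.4 + 2 * 0.95 by norm_num,
      show (3.66 : ℝ) = 1.4 * (2 * 0.95) + 1 by norm_num]
    simp only [map_add, map_mul, map_one]
    ring
  rw [show (2 : ℝ) * 0.95 + 1.4 = 3.3 by norm_num]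
  rcases le_or_gt N 1 with hN | hN
  · exact ⟨1, by omega, shifted_coeff_one_pos hN⟩
  · exact ⟨N - 1, by omega, shifted_coeff_pred_pos hN⟩
end

section
/- Suppose e(x) = x^N − l₁x^{N−1} − ⋯ − l_N with all lᵢ ≥ 0, and let M be the N²×N² block matrix with N diagonal blocks each equal to the companion matrix C of e(x), superdiagonal connector blocks Nᵢ having a single 1 in position (N,1), and a last row determined so that det(xI − M) = x^{N²−3}f(x) for a given monic cubic f. Then the last-row entries in positions (N², j) for j = 1,…,N²−N are the negatives of the coefficients of the successive remainders r₁,…,r_{N−1} of x^{N²−3}f(x) under iterated division by e(x). -/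
/-!
Let `e = ePoly l` and `w j = eAdicMonomial N e j = X ^ (j % N) * e ^ (j / N)`. The shift rows of
`xI - M` annihilate `w` because `X * X ^ k = X ^ (k + 1)`, and so do the connector rows because the
companion block encodes `X ^ N - e`; the last row sends `w` to `e ^ N - ∑_{q < N-1} e ^ q * R q`,
where `R q = blockPoly c q` is the `q`-th block of the last row read as a polynomial of degree
`< N`. As `xI - M` is lower Hessenberg with `-1` on the superdiagonal and `w 0 = 1`, Cramer's rule
gives `det (xI - M) = e ^ N - ∑ e ^ q * R q`. Hence
`x ^ (N² - 3) * f = e ^ (N - 1) * e + ∑ e ^ q * (-R q)` is an `e`-adic expansion whose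
digits `-R q` are the successive remainders.
-/

open Polynomial Finset Matrix

namespace Nat

theorem mul_add_lt_sq {N q b : ℕ} (hq : q < N) (hb : b < N) : q * N + b < N ^ 2 := by
  nlinarith

theorem mul_add_mod_div {N q b : ℕ} (hb : b < N) :
    (q * N + b) % N = b ∧ (q * N + b) / N = q :=
  ⟨mul_add_mod_of_lt hb, by rw [add_comm, add_mul_div_right _ _ (by omega), div_eq_of_lt hb,
    zero_add]⟩

theorem div_lt_of_lt_sq {N j : ℕ} (h : j < N ^ 2) : j / N < N :=
  Nat.div_lt_of_lt_mul (by rwa [← sq])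

theorem add_one_mod_div_of_mod_lt {N i : ℕ} (h : i % N < N - 1) :
    (i + 1) % N = i % N + 1 ∧ (i + 1) / N = i / N := by
  have := mul_add_mod_div (q := i / N) (show i % N + 1 < N by omega)
  rwa [← add_assoc, div_add_mod'] at this

theorem add_one_mod_div_of_mod_eq {N i : ℕ} (hN : 0 < N) (h : i % N = N - 1) :
    (i + 1) % N = 0 ∧ (i + 1) / N = i / N + 1 := by
  have : i + 1 = (i / N + 1) * N := by
    have := div_add_mod' i N
    rw [add_mul, one_mul]
    omega
  rw [this, Nat.mul_div_cancel _ hN, Nat.mul_mod_left]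
  exact ⟨rfl, rfl⟩

theorem sq_sub_one_div_mod {N : ℕ} (hN : 0 < N) :
    (N ^ 2 - 1) / N = N - 1 ∧ (N ^ 2 - 1) % N = N - 1 := by
  have h : N ^ 2 - 1 = (N - 1) * N + (N - 1) := by
    obtain ⟨n, rfl⟩ := exists_eq_add_one_of_ne_zero hN.ne'
    simp only [add_tsub_cancel_right]
    ring_nf
    omega
  rw [h, (mul_add_mod_div (by omega)).1, (mul_add_mod_div (by omega)).2]
  exact ⟨rfl, rfl⟩

theorem add_one_lt_sq_of_mod_lt {N i : ℕ} (hN : 0 < N) (hi : i < N ^ 2) (h : i % N < N - 1) :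
    i + 1 < N ^ 2 := by
  rcases (by omega : i + 1 < N ^ 2 ∨ i = N ^ 2 - 1) with h' | rfl
  · exact h'
  · rw [(sq_sub_one_div_mod hN).2] at h
    omega

theorem rec_const_eq_iterate {α : Type*} (a : α) (f : α → α) (n : ℕ) :
    Nat.rec (motive := fun _ => α) a (fun _ x => f x) n = f^[n] a := by
  induction n with
  | zero => rfl
  | succ n ih => rw [Function.iterate_succ_apply', ← ih]

end Nat

theorem Fin.sum_ite_val_eq {M : Type*} [AddCommMonoid M] {m k : ℕ} (hk : k < m) (f : ℕ → M) :
    ∑ j : Fin m, (if (j : ℕ) = k then f j else 0) = f k := by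
  rw [Fintype.sum_eq_single ⟨k, hk⟩ fun j hj => if_neg fun h => hj (Fin.ext h), if_pos rfl]

theorem Fin.sum_ite_div_eq {M : Type*} [AddCommMonoid M] {N q : ℕ} (hq : q < N)
    (G : Fin (N ^ 2) → M) :
    ∑ j : Fin (N ^ 2), (if (j : ℕ) / N = q then G j else 0)
      = ∑ b : Fin N, G ⟨q * N + b, Nat.mul_add_lt_sq hq b.2⟩ := by
  rw [← sum_filter]
  refine sum_nbij' (fun j => ⟨j % N, Nat.mod_lt _ (by omega)⟩)
    (fun b => ⟨q * N + b, Nat.mul_add_lt_sq hq b.2⟩) ?_ ?_ ?_ ?_ ?_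
  · simp
  · intro b _
    simp [(Nat.mul_add_mod_div (q := q) b.2).2]
  · intro j hj
    simp only [mem_filter, mem_univ, true_and] at hj
    subst hj
    exact Fin.ext (Nat.div_add_mod' j N)
  · intro b _
    exact Fin.ext (Nat.mul_add_mod_div b.2).1
  · intro j hj
    simp only [mem_filter, mem_univ, true_and] at hj
    subst hj
    exact congrArg G (Fin.ext (Nat.div_add_mod' j N).symm)

theorem Matrix.charmatrix_mulVec_apply {R n : Type*} [CommRing R] [Fintype n] [DecidableEq n]
    (A : Matrix n n R) (v : n → R[X]) (i : n) :
    (charmatrix A *ᵥ v) i = X * v i - ∑ j, C (A i j) * v j := by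
  simp [charmatrix, mulVec, dotProduct, sub_mul, diagonal_apply]

/-- The cofactor `(0, m - 1)` is `(-1) ^ (m - 1)` times a lower triangular minor with diagonal
`-1`, so it equals `1`, and Cramer's rule reads off `det A * v 0 = g`. -/
theorem Matrix.det_eq_of_mulVec_eq_single {R : Type*} [CommRing R] {m : ℕ} (hm : 0 < m)
    (A : Matrix (Fin m) (Fin m) R)
    (hsuper : ∀ i j : Fin m, (j : ℕ) = i + 1 → A i j = -1)
    (hzero : ∀ i j : Fin m, (i : ℕ) + 1 < j → A i j = 0)
    {v : Fin m → R} (hv : v ⟨0, hm⟩ = 1) {g : R}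
    (hAv : A *ᵥ v = Pi.single ⟨m - 1, Nat.sub_one_lt hm.ne'⟩ g) : A.det = g := by
  obtain ⟨n, rfl⟩ := Nat.exists_eq_add_one_of_ne_zero hm.ne'
  have hlast : (⟨n + 1 - 1, Nat.sub_one_lt hm.ne'⟩ : Fin (n + 1)) = Fin.last n :=
    Fin.ext (by simp)
  rw [hlast] at hAv
  have hminor : (A.submatrix Fin.castSucc Fin.succ).det = (-1) ^ n := by
    rw [det_of_isLowerTriangular (A.submatrix Fin.castSucc Fin.succ)
      fun i j hij => hzero _ _ (by simpa using hij)]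
    simp [fun i : Fin n => hsuper i.castSucc i.succ (by simp)]
  have hadj : A.adjugate 0 (Fin.last n) = 1 := by
    rw [adjugate_apply, det_succ_row _ (Fin.last n),
      Fintype.sum_eq_single 0 fun j hj => by simp [hj], submatrix_updateRow_succAbove,
      Fin.succAbove_last, Fin.succAbove_zero, hminor]
    simp [← pow_add]
  have := congrFun (congrArg (A.adjugate *ᵥ ·) hAv) 0
  simp only [mulVec_mulVec, adjugate_mul, smul_mulVec, one_mulVec] at this
  simpa [hadj, show v 0 = 1 from hv] using this

theorem Polynomial.modByMonic_iterate_divByMonic {R : Type*} [CommRing R] {e : R[X]}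
    (he : e.Monic) (Q : R[X]) :
    ∀ (k : ℕ) (r : ℕ → R[X]), (∀ w < k, (r w).degree < e.degree) → ∀ u < k,
      (fun p => p /ₘ e)^[u] (e ^ k * Q + ∑ w ∈ range k, e ^ w * r w) %ₘ e = r u := by
  intro k
  induction k with
  | zero => simp
  | succ k ih =>
    intro r hr u hu
    have hdiv := div_modByMonic_unique (f := e ^ (k + 1) * Q + ∑ w ∈ range (k + 1), e ^ w * r w)
      (e ^ k * Q + ∑ w ∈ range k, e ^ w * r (w + 1)) (r 0) he
      ⟨by simp only [sum_range_succ', pow_succ', mul_add, mul_sum, mul_assoc]; ring,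
        hr 0 (by omega)⟩
    cases u with
    | zero => exact hdiv.2
    | succ u =>
      rw [Function.iterate_succ_apply, hdiv.1]
      exact ih (fun w => r (w + 1)) (fun w hw => hr _ (by omega)) u (by omega)

noncomputable section BlockCompanion

variable {R : Type*} [CommRing R] {N : ℕ}

def ePoly (l : Fin N → R) : R[X] := X ^ N - ∑ i : Fin N, C (l i) * X ^ (N - 1 - (i : ℕ))

theorem ePoly_eq_sub_sum_rev (l : Fin N → R) :
    ePoly l = X ^ N - ∑ b : Fin N, C (l b.rev) * X ^ (b : ℕ) := by
  rw [ePoly, ← Equiv.sum_comp Fin.revPerm]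
  congr 1
  refine sum_congr rfl fun b _ => ?_
  rw [Fin.revPerm_apply, Fin.val_rev]
  congr 2
  omega

theorem ePoly_monic (l : Fin N → R) : (ePoly l).Monic := by
  rw [ePoly_eq_sub_sum_rev]
  exact monic_X_pow_sub (degree_sum_fin_lt _)

theorem degree_ePoly [Nontrivial R] (l : Fin N → R) : (ePoly l).degree = N := by
  rw [ePoly_eq_sub_sum_rev, degree_sub_eq_left_of_degree_lt] <;> rw [degree_X_pow]
  exact degree_sum_fin_lt _

def eAdicMonomial (N : ℕ) (e : R[X]) (j : ℕ) : R[X] := X ^ (j % N) * e ^ (j / N)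

theorem X_mul_eAdicMonomial_of_mod_lt (e : R[X]) {j : ℕ} (h : j % N < N - 1) :
    X * eAdicMonomial N e j = eAdicMonomial N e (j + 1) := by
  rw [eAdicMonomial, eAdicMonomial, (Nat.add_one_mod_div_of_mod_lt h).1,
    (Nat.add_one_mod_div_of_mod_lt h).2, pow_succ', mul_assoc]

def blockPoly (c : Fin (N ^ 2) → R) (q : ℕ) : R[X] :=
  ∑ j : Fin (N ^ 2), if (j : ℕ) / N = q then C (c j) * X ^ ((j : ℕ) % N) else 0

theorem degree_blockPoly_lt (c : Fin (N ^ 2) → R) (q : ℕ) : (blockPoly c q).degree < N := by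
  refine (degree_sum_le _ _).trans_lt ((Finset.sup_lt_iff (WithBot.bot_lt_coe N)).2 fun j _ => ?_)
  split_ifs
  · exact (degree_C_mul_X_pow_le _ _).trans_lt
      (WithBot.coe_lt_coe.2 (Nat.mod_lt _ (Nat.pos_of_ne_zero (by rintro rfl; exact j.elim0))))
  · exact WithBot.bot_lt_coe N

theorem coeff_blockPoly (c : Fin (N ^ 2) → R) {q v : ℕ} (hq : q < N) (hv : v < N) :
    (blockPoly c q).coeff v = c ⟨q * N + v, Nat.mul_add_lt_sq hq hv⟩ := by
  rw [blockPoly, finsetSum_coeff, Fintype.sum_eq_single ⟨q * N + v, Nat.mul_add_lt_sq hq hv⟩]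
  · simp [(Nat.mul_add_mod_div hv).1, (Nat.mul_add_mod_div (q := q) hv).2]
  · intro j hj
    split_ifs with hjq
    · rw [coeff_C_mul_X_pow, if_neg]
      rintro rfl
      subst hjq
      exact hj (Fin.ext (Nat.div_add_mod' j N).symm)
    · exact coeff_zero v

theorem sum_ite_div_ne_eq_sum_blockPoly (c : Fin (N ^ 2) → R) (e : R[X]) :
    ∑ j : Fin (N ^ 2), (if (j : ℕ) / N = N - 1 then 0 else C (c j) * eAdicMonomial N e j)
      = ∑ q ∈ range (N - 1), e ^ q * blockPoly c q := by
  simp only [blockPoly, mul_sum]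
  rw [sum_comm]
  refine sum_congr rfl fun j _ => ?_
  have hterm : ∀ q, e ^ q * (if (j : ℕ) / N = q then C (c j) * X ^ ((j : ℕ) % N) else 0)
      = if (j : ℕ) / N = q then C (c j) * eAdicMonomial N e j else 0 := by
    intro q
    split_ifs with h
    · rw [eAdicMonomial, h]
      ring
    · exact mul_zero _
  rw [sum_congr rfl fun q _ => hterm q, sum_ite_eq]
  have := Nat.div_lt_of_lt_sq j.2
  by_cases h : (j : ℕ) / N = N - 1
  · rw [if_pos h, if_neg (by rw [mem_range]; omega)]
  · rw [if_neg h, if_pos (by rw [mem_range]; omega)]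

def blockCompanion (N : ℕ) (hN : 0 < N) (l : Fin N → R) (c : Fin (N ^ 2) → R) :
    Matrix (Fin (N ^ 2)) (Fin (N ^ 2)) R :=
  Matrix.of fun i j =>
    if (i : ℕ) % N < N - 1 then (if (j : ℕ) = (i : ℕ) + 1 then 1 else 0)
    else if (j : ℕ) / N = (i : ℕ) / N then l ⟨N - 1 - ((j : ℕ) % N), by omega⟩
    else if (i : ℕ) < N ^ 2 - 1 then (if (j : ℕ) = (i : ℕ) + 1 then 1 else 0)
    else c j

variable (hN : 0 < N) (l : Fin N → R) (c : Fin (N ^ 2) → R)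

theorem blockCompanion_apply_of_eq_add_one {i j : Fin (N ^ 2)} (h : (j : ℕ) = i + 1) :
    blockCompanion N hN l c i j = 1 := by
  rw [blockCompanion, of_apply]
  by_cases hi : (i : ℕ) % N < N - 1
  · rw [if_pos hi, if_pos h]
  have hdiv : (j : ℕ) / N = i / N + 1 :=
    h ▸ (Nat.add_one_mod_div_of_mod_eq hN (by have := Nat.mod_lt i hN; omega)).2
  rw [if_neg hi, if_neg (by omega), if_pos (by omega), if_pos h]

theorem blockCompanion_apply_of_add_one_lt {i j : Fin (N ^ 2)} (h : (i : ℕ) + 1 < j) :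
    blockCompanion N hN l c i j = 0 := by
  rw [blockCompanion, of_apply]
  by_cases hi : (i : ℕ) % N < N - 1
  · rw [if_pos hi, if_neg (by omega)]
  have hdiv : (i : ℕ) / N + 1 ≤ j / N := by
    rw [← (Nat.add_one_mod_div_of_mod_eq hN (by have := Nat.mod_lt i hN; omega)).2]
    exact Nat.div_le_div_right h.le
  rw [if_neg hi, if_neg (by omega), if_pos (by omega), if_neg (by omega)]

theorem sum_ite_div_eq_mul_ePoly_pow {q : ℕ} (hq : q < N) :
    ∑ j : Fin (N ^ 2), (if (j : ℕ) / N = q then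
        C (l ⟨N - 1 - (j : ℕ) % N, by omega⟩) * eAdicMonomial N (ePoly l) j else 0)
      = (X ^ N - ePoly l) * ePoly l ^ q := by
  rw [Fin.sum_ite_div_eq hq, ePoly_eq_sub_sum_rev, sub_sub_cancel, sum_mul]
  refine sum_congr rfl fun b _ => ?_
  simp only [eAdicMonomial, (Nat.mul_add_mod_div b.2).1, (Nat.mul_add_mod_div (q := q) b.2).2,
    mul_assoc]
  congr 3
  ext
  simp only [Fin.val_rev]
  omega

theorem sum_blockCompanion_row_of_mod_lt {i : Fin (N ^ 2)} (hi : (i : ℕ) % N < N - 1) :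
    ∑ j, C (blockCompanion N hN l c i j) * eAdicMonomial N (ePoly l) j
      = X * eAdicMonomial N (ePoly l) i := by
  simp only [blockCompanion, of_apply, if_pos hi, apply_ite C, map_one, map_zero, ite_mul,
    one_mul, zero_mul]
  rw [Fin.sum_ite_val_eq (Nat.add_one_lt_sq_of_mod_lt hN i.2 hi),
    X_mul_eAdicMonomial_of_mod_lt _ hi]

theorem sum_blockCompanion_row_of_not_mod_lt {i : Fin (N ^ 2)} (hi : ¬(i : ℕ) % N < N - 1) :
    ∑ j, C (blockCompanion N hN l c i j) * eAdicMonomial N (ePoly l) j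
      = (X ^ N - ePoly l) * ePoly l ^ ((i : ℕ) / N)
        + ∑ j : Fin (N ^ 2), if (j : ℕ) / N = (i : ℕ) / N then 0 else
            C (if (i : ℕ) < N ^ 2 - 1 then (if (j : ℕ) = i + 1 then 1 else 0) else c j)
              * eAdicMonomial N (ePoly l) j := by
  rw [← sum_ite_div_eq_mul_ePoly_pow l (Nat.div_lt_of_lt_sq i.2), ← sum_add_distrib]
  refine sum_congr rfl fun j _ => ?_
  simp only [blockCompanion, of_apply, if_neg hi]
  split_ifs <;> simp

theorem sum_blockCompanion_row_of_lt {i : Fin (N ^ 2)} (hi : ¬(i : ℕ) % N < N - 1)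
    (hlt : (i : ℕ) < N ^ 2 - 1) :
    ∑ j, C (blockCompanion N hN l c i j) * eAdicMonomial N (ePoly l) j
      = X * eAdicMonomial N (ePoly l) i := by
  have hmod : (i : ℕ) % N = N - 1 := by have := Nat.mod_lt i hN; omega
  obtain ⟨hmod', hdiv'⟩ := Nat.add_one_mod_div_of_mod_eq hN hmod
  have hnext : ∀ j : Fin (N ^ 2), (if (j : ℕ) / N = (i : ℕ) / N then 0 else
      C (if (i : ℕ) < N ^ 2 - 1 then (if (j : ℕ) = i + 1 then 1 else 0) else c j)
        * eAdicMonomial N (ePoly l) j)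
      = if (j : ℕ) = i + 1 then eAdicMonomial N (ePoly l) j else 0 := by
    intro j
    by_cases hj : (j : ℕ) = i + 1
    · rw [if_neg (by rw [hj, hdiv']; omega), if_pos hlt, if_pos hj, if_pos hj, map_one, one_mul]
    · split_ifs <;> simp
  rw [sum_blockCompanion_row_of_not_mod_lt hN l c hi, sum_congr rfl fun j _ => hnext j,
    Fin.sum_ite_val_eq (by omega)]
  simp only [eAdicMonomial, hmod, hmod', hdiv']
  rw [← mul_assoc, mul_pow_sub_one hN.ne']
  ring

theorem sum_blockCompanion_row_last :
    ∑ j, C (blockCompanion N hN l c ⟨N ^ 2 - 1, Nat.sub_one_lt (by positivity)⟩ j)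
        * eAdicMonomial N (ePoly l) j
      = (X ^ N - ePoly l) * ePoly l ^ (N - 1)
        + ∑ q ∈ range (N - 1), ePoly l ^ q * blockPoly c q := by
  obtain ⟨hdiv, hmod⟩ := Nat.sq_sub_one_div_mod hN
  rw [sum_blockCompanion_row_of_not_mod_lt hN l c (by simp only; omega),
    ← sum_ite_div_ne_eq_sum_blockPoly c]
  simp only [hdiv, lt_irrefl, if_false]

theorem charmatrix_blockCompanion_mulVec :
    charmatrix (blockCompanion N hN l c) *ᵥ (fun j => eAdicMonomial N (ePoly l) j)
      = Pi.single ⟨N ^ 2 - 1, Nat.sub_one_lt (by positivity)⟩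
          (ePoly l ^ N - ∑ q ∈ range (N - 1), ePoly l ^ q * blockPoly c q) := by
  funext i
  rw [charmatrix_mulVec_apply, Pi.single_apply]
  split_ifs with hi
  · subst hi
    obtain ⟨hdiv, hmod⟩ := Nat.sq_sub_one_div_mod hN
    rw [sum_blockCompanion_row_last, eAdicMonomial, hdiv, hmod, ← mul_assoc,
      mul_pow_sub_one hN.ne', ← mul_pow_sub_one hN.ne' (ePoly l)]
    ring
  · have hlt : (i : ℕ) < N ^ 2 - 1 := by
      have : (i : ℕ) ≠ N ^ 2 - 1 := fun h => hi (Fin.ext h)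
      omega
    by_cases hmod : (i : ℕ) % N < N - 1
    · rw [sum_blockCompanion_row_of_mod_lt hN l c hmod, sub_self]
    · rw [sum_blockCompanion_row_of_lt hN l c hmod hlt, sub_self]

theorem charpoly_blockCompanion :
    (blockCompanion N hN l c).charpoly
      = ePoly l ^ N - ∑ q ∈ range (N - 1), ePoly l ^ q * blockPoly c q :=
  det_eq_of_mulVec_eq_single (by positivity) _
    (fun i j h => by
      rw [charmatrix_apply_ne _ _ _ (Fin.ne_of_val_ne (by omega)),
        blockCompanion_apply_of_eq_add_one hN l c h, map_one])
    (fun i j h => by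
      rw [charmatrix_apply_ne _ _ _ (Fin.ne_of_val_ne (by omega)),
        blockCompanion_apply_of_add_one_lt hN l c h, map_zero, neg_zero])
    (by simp [eAdicMonomial]) (charmatrix_blockCompanion_mulVec hN l c)

end BlockCompanion

open Polynomial in
/-- Let `e(x) = x^N - l₁x^{N-1} - ⋯ - l_N` with all `lᵢ ≥ 0` (here `l i = l_{i+1}`),
and let `M` be the `N² × N²` block matrix with `N` diagonal blocks equal to the
companion matrix of `e`, connector blocks with a single `1` in position `(N,1)`, and
last row containing the unknown entries `c j` in the first `N² - N` columns. If
`det(xI - M) = x^{N²-3} f(x)` for a monic cubic `f`, then the last-row entries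
`c ((u)N + v)` (for `0 ≤ u < N-1`, `0 ≤ v < N`) are the negatives of the coefficients
of `x^v` in the successive remainders `r_{u+1}` of `x^{N²-3} f(x)` under iterated
division by `e(x)`. -/
theorem stmt18 (N : ℕ) (hN : 2 ≤ N) (l : Fin N → ℝ)
    (e : Polynomial ℝ)
    (he : e = X^N - ∑ i : Fin N, C (l i) * X^(N - 1 - (i : ℕ)))
    (f : Polynomial ℝ)
    (c : Fin (N^2) → ℝ)
    (M : Matrix (Fin (N^2)) (Fin (N^2)) ℝ)
    (hM : M = Matrix.of fun (i j : Fin (N^2)) =>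
      if (i : ℕ) % N < N - 1 then (if (j : ℕ) = (i : ℕ) + 1 then 1 else 0)
      else if (j : ℕ) / N = (i : ℕ) / N then l ⟨N - 1 - ((j : ℕ) % N), by omega⟩
      else if (i : ℕ) < N^2 - 1 then (if (j : ℕ) = (i : ℕ) + 1 then 1 else 0)
      else c j)
    (hchar : M.charpoly = X^(N^2 - 3) * f) :
    ∀ u v : ℕ, u < N - 1 → v < N → ∀ h : u * N + v < N^2,
      c ⟨u * N + v, h⟩ =
        -(((Nat.rec (motive := fun _ => Polynomial ℝ) (X^(N^2 - 3) * f)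
            (fun _ g => g /ₘ e) u) %ₘ e).coeff v) := by
  intro u v hu hv h
  have hpos : 0 < N := by omega
  replace he : e = ePoly l := he
  replace hM : M = blockCompanion N hpos l c := hM
  subst he hM
  have hexpansion : X ^ (N ^ 2 - 3) * f
      = ePoly l ^ (N - 1) * ePoly l + ∑ q ∈ range (N - 1), ePoly l ^ q * -blockPoly c q := by
    rw [← hchar, charpoly_blockCompanion, pow_sub_one_mul hpos.ne', sub_eq_add_neg,
      ← sum_neg_distrib]
    simp only [mul_neg]
  have hdigits := modByMonic_iterate_divByMonic (ePoly_monic l) (ePoly l) (N - 1)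
    (fun q => -blockPoly c q)
    (fun q _ => by rw [degree_neg, degree_ePoly]; exact degree_blockPoly_lt c q) u hu
  rw [Nat.rec_const_eq_iterate, hexpansion, hdigits, coeff_neg, neg_neg,
    coeff_blockPoly c (by omega) hv]
end
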